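/- Let (σ, ε) and (ρ, η) be admissible pairs for a division ring K with ε, η ∈ {1, −1}, and let V be a 4-dimensional right K-vector space with basis e₁, e₂, f₁, f₂. Let φ be a (σ, ε)-sesquilinear form and ψ a (ρ, η)-sesquilinear form on V. Assume: φ(e₁, f₁) = φ(e₂, f₂) = 1; φ vanishes on each of the pairs (e₁,e₁), (e₂,e₂), (f₁,f₁), (f₂,f₂), (e₁,e₂), (f₁,f₂), (e₁,f₂), (e₂,f₁); and, setting 𝒬 to be the union of the K-spans ⟨e₁,e₂⟩ ∪ ⟨f₁,f₂⟩ ∪ ⟨e₁,f₂⟩ ∪ ⟨f₁,e₂⟩, one has φ(x, y) = 0 if and only if ψ(x, y) = 0 for all x, y ∈ 𝒬. Then c := ψ(e₁, f₁) is nonzero and ψ = c·φ, i.e. ψ(x, y) = c·φ(x, y) for all x, y ∈ V; moreover ρ(t) = c·σ(t)·c⁻¹ for all t ∈ K and c·σ(c)⁻¹·ε = η. -/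

import Mathlib

/-! On the frame vectors `ψ` inherits the zeros of `φ` from the orthogonality hypothesis. Two
further orthogonal pairs in `𝒬` pin down the remaining values: `(e₁ + e₂, f₂ - f₁)` gives
`ψ(e₂, f₂) = ψ(e₁, f₁) = c`, and `(e₁ s + f₂, f₁ - e₂ ε⁻¹ σ(s))` gives
`ρ(s) c = ψ(f₂, e₂) ε⁻¹ σ(s)`, which at `s = 1` reads `ψ(f₂, e₂) = c ε` and hence
`ρ(s) c = c σ(s)`. Now `ψ` and `c φ` are additive and transform alike under scalars in each
argument, so agreeing on the basis they agree everywhere; the formula for `η` is the reflexivity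
`ψ(f₂, e₂) = ρ(c) η`. -/

/-- An anti-automorphism of a division ring `K`: an additive bijection `σ` with
`σ (s * t) = σ t * σ s` and `σ 1 = 1`. -/
def IsAntiAuto {K : Type*} [DivisionRing K] (σ : K → K) : Prop :=
  Function.Bijective σ ∧ (∀ s t : K, σ (s + t) = σ s + σ t) ∧
    (∀ s t : K, σ (s * t) = σ t * σ s) ∧ σ 1 = 1

/-- An admissible pair `(σ, ε)` for a division ring `K`. -/
def IsAdmissiblePair {K : Type*} [DivisionRing K] (σ : K → K) (ε : K) : Prop :=
  IsAntiAuto σ ∧ ε ≠ 0 ∧ σ ε = ε⁻¹ ∧ ∀ t : K, σ (σ t) = ε * t * ε⁻¹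

/-- A `(σ, ε)`-sesquilinear form on a right `K`-vector space `V`
(a right `K`-vector space is modelled as a module over `Kᵐᵒᵖ`;
the right scalar action `x · s` is `MulOpposite.op s • x`). -/
def IsSesquilinear {K V : Type*} [DivisionRing K] [AddCommGroup V] [Module Kᵐᵒᵖ V]
    (σ : K → K) (ε : K) (f : V → V → K) : Prop :=
  (∀ x y z : V, f (x + y) z = f x z + f y z) ∧
  (∀ x y z : V, f x (y + z) = f x y + f x z) ∧
  (∀ (x y : V) (s : K), f x (MulOpposite.op s • y) = f x y * s) ∧
  ∀ x y : V, f y x = σ (f x y) * ε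

open MulOpposite Submodule

namespace IsAntiAuto

variable {K : Type*} [DivisionRing K] {σ : K → K}

theorem map_zero (hσ : IsAntiAuto σ) : σ 0 = 0 := by
  simpa using hσ.2.1 0 0

theorem map_one (hσ : IsAntiAuto σ) : σ 1 = 1 := hσ.2.2.2

theorem map_mul (hσ : IsAntiAuto σ) (s t : K) : σ (s * t) = σ t * σ s := hσ.2.2.1 s t

theorem map_ne_zero (hσ : IsAntiAuto σ) {t : K} (ht : t ≠ 0) : σ t ≠ 0 :=
  fun h => ht (hσ.1.injective (h.trans hσ.map_zero.symm))

end IsAntiAuto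

theorem eq_mul_inv_mul_of_mul_eq_mul {K : Type*} [DivisionRing K] {a b c ε η : K} (hc : c ≠ 0)
    (hb : b ≠ 0) (hab : a * c = c * b) (h : a * η = c * ε) : η = c * b⁻¹ * ε := by
  have ha : a = c * b * c⁻¹ := by rw [← hab, mul_inv_cancel_right₀ hc]
  have ha0 : a ≠ 0 := by rw [ha]; exact mul_ne_zero (mul_ne_zero hc hb) (inv_ne_zero hc)
  calc η = a⁻¹ * (a * η) := (inv_mul_cancel_left₀ ha0 η).symm
    _ = c * b⁻¹ * ε := by
      rw [h, ha, mul_inv_rev, mul_inv_rev, inv_inv]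
      simp only [mul_assoc, inv_mul_cancel_left₀ hc]

theorem eq_of_forall_basis_eq {R M A ι : Type*} [Semiring R] [AddCommMonoid M] [Module R M]
    [AddCancelMonoid A] (b : Module.Basis ι R M) {g h : M → A}
    (hg : ∀ x y, g (x + y) = g x + g y) (hh : ∀ x y, h (x + y) = h x + h y)
    (hsmul : ∀ (r : R) x, g x = h x → g (r • x) = h (r • x))
    (hb : ∀ i, g (b i) = h (b i)) (x : M) : g x = h x := by
  have hx : x ∈ span R (Set.range b) := by simp [b.span_eq]
  induction hx using Submodule.span_induction with
  | mem v hv => obtain ⟨i, rfl⟩ := hv; exact hb i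
  | zero =>
    have hg0 : g 0 = 0 := by simpa using hg 0 0
    have hh0 : h 0 = 0 := by simpa using hh 0 0
    rw [hg0, hh0]
  | add u v _ _ hu hv => rw [hg, hh, hu, hv]
  | smul r u _ hu => exact hsmul r u hu

namespace IsSesquilinear

variable {K V : Type*} [DivisionRing K] [AddCommGroup V] [Module Kᵐᵒᵖ V]
  {σ : K → K} {ε : K} {f : V → V → K}

theorem map_add_left (hf : IsSesquilinear σ ε f) (x y z : V) : f (x + y) z = f x z + f y z :=
  hf.1 x y z

theorem map_add_right (hf : IsSesquilinear σ ε f) (x y z : V) : f x (y + z) = f x y + f x z :=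
  hf.2.1 x y z

theorem map_smul_right (hf : IsSesquilinear σ ε f) (x y : V) (s : K) :
    f x (op s • y) = f x y * s :=
  hf.2.2.1 x y s

theorem map_swap (hf : IsSesquilinear σ ε f) (x y : V) : f y x = σ (f x y) * ε :=
  hf.2.2.2 x y

theorem map_smul_left (hf : IsSesquilinear σ ε f) (hσ : IsAntiAuto σ) (s : K) (x y : V) :
    f (op s • x) y = σ s * f x y := by
  rw [hf.map_swap y, hf.map_smul_right, hσ.map_mul, mul_assoc, ← hf.map_swap]

theorem map_swap_of_eq_one (hf : IsSesquilinear σ ε f) (hσ : IsAntiAuto σ) {x y : V}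
    (h : f x y = 1) : f y x = ε := by
  rw [hf.map_swap, h, hσ.map_one, one_mul]

theorem map_swap_eq_zero (hf : IsSesquilinear σ ε f) (hσ : IsAntiAuto σ) {x y : V}
    (h : f x y = 0) : f y x = 0 := by
  rw [hf.map_swap, h, hσ.map_zero, zero_mul]

theorem map_smul_add_smul (hf : IsSesquilinear σ ε f) (hσ : IsAntiAuto σ) (a b s t : K)
    (u u' w w' : V) :
    f (op a • u + op b • u') (op s • w + op t • w') =
      σ a * f u w * s + σ a * f u w' * t + (σ b * f u' w * s + σ b * f u' w' * t) := by
  simp only [hf.map_add_left, hf.map_add_right, hf.map_smul_left hσ, hf.map_smul_right,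
    mul_assoc]

theorem eq_mul_of_forall_basis {ρ : K → K} {η : K} {ψ : V → V → K} {ι : Type*}
    (hφ : IsSesquilinear σ ε f) (hψ : IsSesquilinear ρ η ψ) (hσ : IsAntiAuto σ)
    (hρ : IsAntiAuto ρ) (b : Module.Basis ι Kᵐᵒᵖ V) {c : K} (hc : ∀ t, ρ t * c = c * σ t)
    (hb : ∀ i j, ψ (b i) (b j) = c * f (b i) (b j)) (x y : V) : ψ x y = c * f x y := by
  have hright : ∀ i, ∀ y, ψ (b i) y = c * f (b i) y := fun i =>
    eq_of_forall_basis_eq b (hψ.map_add_right _) (by simp [hφ.map_add_right, mul_add])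
      (fun s y hy => by rw [← op_unop s, hψ.map_smul_right, hφ.map_smul_right, hy, mul_assoc])
      (hb i)
  refine eq_of_forall_basis_eq (g := (ψ · y)) (h := (c * f · y)) b (hψ.map_add_left · · y)
    (by simp [hφ.map_add_left, mul_add])
    (fun s x hx => ?_) (hright · y) x
  rw [← op_unop s, hψ.map_smul_left hρ, hφ.map_smul_left hσ, hx, ← mul_assoc, hc, mul_assoc]

end IsSesquilinear

section Frame

variable {K V : Type*} [DivisionRing K] [AddCommGroup V] [Module Kᵐᵒᵖ V]

variable (K) in
def frameQuadric (e₁ e₂ f₁ f₂ : V) : Set V :=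
  ((span Kᵐᵒᵖ {e₁, e₂} : Submodule Kᵐᵒᵖ V) : Set V) ∪
    ((span Kᵐᵒᵖ {f₁, f₂} : Submodule Kᵐᵒᵖ V) : Set V) ∪
    ((span Kᵐᵒᵖ {e₁, f₂} : Submodule Kᵐᵒᵖ V) : Set V) ∪
    ((span Kᵐᵒᵖ {f₁, e₂} : Submodule Kᵐᵒᵖ V) : Set V)

variable {e₁ e₂ f₁ f₂ : V}

theorem mem_frameQuadric_of_mem_span {u v x : V}
    (huv : (u, v) ∈ [(e₁, e₂), (f₁, f₂), (e₁, f₂), (f₁, e₂)]) (hx : x ∈ span Kᵐᵒᵖ {u, v}) :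
    x ∈ frameQuadric K e₁ e₂ f₁ f₂ := by
  simp only [List.mem_cons, Prod.mk.injEq, List.not_mem_nil, or_false] at huv
  rcases huv with ⟨rfl, rfl⟩ | ⟨rfl, rfl⟩ | ⟨rfl, rfl⟩ | ⟨rfl, rfl⟩ <;> simp [frameQuadric, hx]

theorem frame_subset_frameQuadric : {e₁, e₂, f₁, f₂} ⊆ frameQuadric K e₁ e₂ f₁ f₂ := by
  simp [Set.insert_subset_iff, frameQuadric, mem_span_of_mem]

variable {σ ρ : K → K} {ε η : K} {φ ψ : V → V → K}

theorem apply_eq_zero_of_frame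
    (horth : ∀ x ∈ frameQuadric K e₁ e₂ f₁ f₂, ∀ y ∈ frameQuadric K e₁ e₂ f₁ f₂,
      (φ x y = 0 ↔ ψ x y = 0))
    {x y : V} (hx : x ∈ ({e₁, e₂, f₁, f₂} : Set V)) (hy : y ∈ ({e₁, e₂, f₁, f₂} : Set V))
    (h : φ x y = 0) : ψ x y = 0 :=
  (horth x (frame_subset_frameQuadric hx) y (frame_subset_frameQuadric hy)).1 h

theorem apply_e₂_f₂_eq_apply_e₁_f₁ (hφ : IsSesquilinear σ ε φ) (hψ : IsSesquilinear ρ η ψ)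
    (hσ : IsAntiAuto σ) (hρ : IsAntiAuto ρ)
    (horth : ∀ x ∈ frameQuadric K e₁ e₂ f₁ f₂, ∀ y ∈ frameQuadric K e₁ e₂ f₁ f₂,
      (φ x y = 0 ↔ ψ x y = 0))
    (h11 : φ e₁ f₁ = 1) (h22 : φ e₂ f₂ = 1) (z7 : φ e₁ f₂ = 0) (z8 : φ e₂ f₁ = 0) :
    ψ e₂ f₂ = ψ e₁ f₁ := by
  have z7' := apply_eq_zero_of_frame horth (by simp) (by simp) z7
  have z8' := apply_eq_zero_of_frame horth (by simp) (by simp) z8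
  have key := (horth (op 1 • e₁ + op 1 • e₂)
    (mem_frameQuadric_of_mem_span (by simp) (mem_span_pair.2 ⟨_, _, rfl⟩))
    (op (-1) • f₁ + op 1 • f₂)
    (mem_frameQuadric_of_mem_span (by simp) (mem_span_pair.2 ⟨_, _, rfl⟩))).1
    (by rw [hφ.map_smul_add_smul hσ]; simp [hσ.map_one, h11, h22, z7, z8])
  rw [hψ.map_smul_add_smul hρ] at key
  simp only [hρ.map_one, z7', z8'] at key
  linear_combination (norm := noncomm_ring) key

theorem mul_apply_e₁_f₁_eq (hφ : IsSesquilinear σ ε φ) (hψ : IsSesquilinear ρ η ψ)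
    (hσ : IsAntiAuto σ) (hρ : IsAntiAuto ρ)
    (horth : ∀ x ∈ frameQuadric K e₁ e₂ f₁ f₂, ∀ y ∈ frameQuadric K e₁ e₂ f₁ f₂,
      (φ x y = 0 ↔ ψ x y = 0))
    (hε : ε ≠ 0) (h11 : φ e₁ f₁ = 1) (h22 : φ e₂ f₂ = 1) (z5 : φ e₁ e₂ = 0) (z6 : φ f₁ f₂ = 0)
    (s : K) : ρ s * ψ e₁ f₁ = ψ f₂ e₂ * ε⁻¹ * σ s := by
  have z5' := apply_eq_zero_of_frame horth (by simp) (by simp) z5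
  have z6' := hψ.map_swap_eq_zero hρ (apply_eq_zero_of_frame horth (by simp) (by simp) z6)
  have key := (horth (op s • e₁ + op 1 • f₂)
    (mem_frameQuadric_of_mem_span (by simp) (mem_span_pair.2 ⟨_, _, rfl⟩))
    (op 1 • f₁ + op (-(ε⁻¹ * σ s)) • e₂)
    (mem_frameQuadric_of_mem_span (by simp) (mem_span_pair.2 ⟨_, _, rfl⟩))).1
    (by
      rw [hφ.map_smul_add_smul hσ]
      simp [hσ.map_one, h11, z5, hφ.map_swap_eq_zero hσ z6, hφ.map_swap_of_eq_one hσ h22, hε])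
  rw [hψ.map_smul_add_smul hρ] at key
  simp only [hρ.map_one, z5', z6'] at key
  linear_combination (norm := noncomm_ring) key

end Frame

/-- Two sesquilinear forms on a rank-`2` "frame" subspace defining the same
orthogonality relation on the quadric set `𝒬` are proportional. -/
theorem statement16 {K V : Type*} [DivisionRing K] [AddCommGroup V] [Module Kᵐᵒᵖ V]
    (σ : K → K) (ε : K) (hσ : IsAdmissiblePair σ ε)
    (ρ : K → K) (η : K) (hρ : IsAdmissiblePair ρ η)
    (e₁ e₂ f₁ f₂ : V) (b : Module.Basis (Fin 4) Kᵐᵒᵖ V) (hb : ⇑b = ![e₁, e₂, f₁, f₂])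
    (φ ψ : V → V → K)
    (hφ : IsSesquilinear σ ε φ) (hψ : IsSesquilinear ρ η ψ)
    (h11 : φ e₁ f₁ = 1) (h22 : φ e₂ f₂ = 1)
    (z1 : φ e₁ e₁ = 0) (z2 : φ e₂ e₂ = 0) (z3 : φ f₁ f₁ = 0) (z4 : φ f₂ f₂ = 0)
    (z5 : φ e₁ e₂ = 0) (z6 : φ f₁ f₂ = 0) (z7 : φ e₁ f₂ = 0) (z8 : φ e₂ f₁ = 0)
    (horth : ∀ x ∈ (((Submodule.span Kᵐᵒᵖ {e₁, e₂} : Submodule Kᵐᵒᵖ V) : Set V) ∪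
        ((Submodule.span Kᵐᵒᵖ {f₁, f₂} : Submodule Kᵐᵒᵖ V) : Set V) ∪
        ((Submodule.span Kᵐᵒᵖ {e₁, f₂} : Submodule Kᵐᵒᵖ V) : Set V) ∪
        ((Submodule.span Kᵐᵒᵖ {f₁, e₂} : Submodule Kᵐᵒᵖ V) : Set V)),
      ∀ y ∈ (((Submodule.span Kᵐᵒᵖ {e₁, e₂} : Submodule Kᵐᵒᵖ V) : Set V) ∪
        ((Submodule.span Kᵐᵒᵖ {f₁, f₂} : Submodule Kᵐᵒᵖ V) : Set V) ∪
        ((Submodule.span Kᵐᵒᵖ {e₁, f₂} : Submodule Kᵐᵒᵖ V) : Set V) ∪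
        ((Submodule.span Kᵐᵒᵖ {f₁, e₂} : Submodule Kᵐᵒᵖ V) : Set V)),
      (φ x y = 0 ↔ ψ x y = 0)) :
    ψ e₁ f₁ ≠ 0 ∧ (∀ x y : V, ψ x y = ψ e₁ f₁ * φ x y) ∧
      (∀ t : K, ρ t = ψ e₁ f₁ * σ t * (ψ e₁ f₁)⁻¹) ∧
      ψ e₁ f₁ * (σ (ψ e₁ f₁))⁻¹ * ε = η := by
  obtain ⟨hσa, hε, -, -⟩ := hσ
  obtain ⟨hρa, -, -, -⟩ := hρ
  have hQ : {e₁, e₂, f₁, f₂} ⊆ frameQuadric K e₁ e₂ f₁ f₂ := frame_subset_frameQuadric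
  have htwist := mul_apply_e₁_f₁_eq hφ hψ hσa hρa horth hε h11 h22 z5 z6
  have hd := apply_e₂_f₂_eq_apply_e₁_f₁ hφ hψ hσa hρa horth h11 h22 z7 z8
  set c := ψ e₁ f₁
  have hc : c ≠ 0 := fun h =>
    one_ne_zero (h11 ▸ (horth e₁ (hQ (by simp)) f₁ (hQ (by simp))).2 h)
  have hψfe : ψ f₂ e₂ = c * ε := by
    have h1 := htwist 1
    rw [hρa.map_one, hσa.map_one, one_mul, mul_one] at h1
    rw [h1, inv_mul_cancel_right₀ hε]
  have hρc (t : K) : ρ t * c = c * σ t := by rw [htwist, hψfe, mul_inv_cancel_right₀ hε]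
  have hρη : ρ c * η = c * ε := by rw [← hψfe, hψ.map_swap e₂ f₂, hd]
  have hψfe₁ : ψ f₁ e₁ = c * ε := by rw [hψ.map_swap e₁ f₁, hρη]
  have hprop := hφ.eq_mul_of_forall_basis hψ hσa hρa b hρc fun i j => by
    by_cases h0 : φ (b i) (b j) = 0
    · rw [h0, mul_zero]
      exact apply_eq_zero_of_frame horth (by fin_cases i <;> simp [hb])
        (by fin_cases j <;> simp [hb]) h0
    · have sw {x y : V} (h : φ x y = 0) : φ y x = 0 := hφ.map_swap_eq_zero hσa h
      fin_cases i <;> fin_cases j <;>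
        simp [hb, h11, h22, hφ.map_swap_of_eq_one hσa h11, hφ.map_swap_of_eq_one hσa h22,
          z1, z2, z3, z4, z5, z6, z7, z8, sw z5, sw z6, sw z7, sw z8, c, hd, hψfe, hψfe₁] at h0 ⊢
  refine ⟨hc, hprop, fun t => by rw [← hρc t, mul_inv_cancel_right₀ hc], ?_⟩
  exact (eq_mul_inv_mul_of_mul_eq_mul hc (hσa.map_ne_zero hc) (hρc c) hρη).symm
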